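/- arXiv:2306.12074 — 6 statements merged into one kernel-verified Lean document; each statement's English description precedes it below -/
import Mathlib

section
/- Let ξ, ψ: (0,∞) → ℝ be non-constant functions such that for all x, y > 0 and all t > 1, ξ(tx)ψ(ty) − ξ(x)ψ(y) = α(x,t) + β(y,t) for some functions α: (0,∞)×(1,∞) → ℝ and β: (0,∞)×(1,∞) → ℝ. Then there exists a function δ_ξ: (0,∞) → ℝ with δ_ξ(t) ≠ 0 for all t > 0, δ_ξ(1) = 1, and δ_ξ(t⁻¹) = δ_ξ(t)⁻¹, such that for all x₁, x₂ > 0 and all t > 0, ξ(tx₁) − ξ(tx₂) = δ_ξ(t)(ξ(x₁) − ξ(x₂)). -/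
theorem stmt1 (ξ ψ : ℝ → ℝ)
    (hξ : ∃ x₁ > (0:ℝ), ∃ x₂ > (0:ℝ), ξ x₁ ≠ ξ x₂)
    (hψ : ∃ y₁ > (0:ℝ), ∃ y₂ > (0:ℝ), ψ y₁ ≠ ψ y₂)
    (α β : ℝ → ℝ → ℝ)
    (h : ∀ x > (0:ℝ), ∀ y > (0:ℝ), ∀ t > (1:ℝ),
      ξ (t * x) * ψ (t * y) - ξ x * ψ y = α x t + β y t) :
    ∃ δ : ℝ → ℝ, (∀ t > (0:ℝ), δ t ≠ 0) ∧ δ 1 = 1 ∧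
      (∀ t > (0:ℝ), δ t⁻¹ = (δ t)⁻¹) ∧
      ∀ x₁ > (0:ℝ), ∀ x₂ > (0:ℝ), ∀ t > (0:ℝ),
        ξ (t * x₁) - ξ (t * x₂) = δ t * (ξ x₁ - ξ x₂) := by
  obtain ⟨a, ha, b, hb, hab⟩ := hξ
  obtain ⟨c, hc, d, hd, hcd⟩ := hψ
  -- key product identity
  have key : ∀ t > (1:ℝ), ∀ x₁ > (0:ℝ), ∀ x₂ > (0:ℝ), ∀ y₁ > (0:ℝ), ∀ y₂ > (0:ℝ),
      (ξ (t * x₁) - ξ (t * x₂)) * (ψ (t * y₁) - ψ (t * y₂))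
        = (ξ x₁ - ξ x₂) * (ψ y₁ - ψ y₂) := by
    intro t ht x₁ hx₁ x₂ hx₂ y₁ hy₁ y₂ hy₂
    have h11 := h x₁ hx₁ y₁ hy₁ t ht
    have h12 := h x₁ hx₁ y₂ hy₂ t ht
    have h21 := h x₂ hx₂ y₁ hy₁ t ht
    have h22 := h x₂ hx₂ y₂ hy₂ t ht
    linear_combination h11 - h12 - h21 + h22
  have hψne : ∀ t > (1:ℝ), ψ (t * c) - ψ (t * d) ≠ 0 := by
    intro t ht hzero
    have := key t ht a ha b hb c hc d hd
    rw [hzero, mul_zero] at this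
    have h1 : ξ a - ξ b ≠ 0 := sub_ne_zero.mpr hab
    have h2 : ψ c - ψ d ≠ 0 := sub_ne_zero.mpr hcd
    exact (mul_ne_zero h1 h2) this.symm
  set δ₀ : ℝ → ℝ := fun t => (ψ c - ψ d) / (ψ (t * c) - ψ (t * d)) with hδ₀
  have hδ₀ne : ∀ t > (1:ℝ), δ₀ t ≠ 0 := by
    intro t ht
    exact div_ne_zero (sub_ne_zero.mpr hcd) (hψne t ht)
  have hmain : ∀ t > (1:ℝ), ∀ x₁ > (0:ℝ), ∀ x₂ > (0:ℝ),
      ξ (t * x₁) - ξ (t * x₂) = δ₀ t * (ξ x₁ - ξ x₂) := by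
    intro t ht x₁ hx₁ x₂ hx₂
    have hk := key t ht x₁ hx₁ x₂ hx₂ c hc d hd
    have hne := hψne t ht
    simp only [hδ₀]
    field_simp
    linarith [hk]
  refine ⟨fun t => if 1 < t then δ₀ t else if t = 1 then 1 else (δ₀ t⁻¹)⁻¹, ?_, ?_, ?_, ?_⟩
  · intro t ht
    by_cases h1 : 1 < t
    · simpa [h1] using hδ₀ne t h1
    · by_cases h2 : t = 1
      · simp [h1, h2]
      · have htlt : t < 1 := lt_of_le_of_ne (not_lt.mp h1) h2
        have hinv : 1 < t⁻¹ := (one_lt_inv₀ ht).mpr htlt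
        simp only [h1, h2, if_false]
        exact inv_ne_zero (hδ₀ne t⁻¹ hinv)
  · norm_num
  · intro t ht
    by_cases h1 : 1 < t
    · have hti : t⁻¹ < 1 := inv_lt_one_of_one_lt₀ h1
      have hne1 : ¬ (1 < t⁻¹) := not_lt.mpr hti.le
      have hne2 : t⁻¹ ≠ 1 := ne_of_lt hti
      simp [h1, hne1, hne2, inv_inv]
    · by_cases h2 : t = 1
      · simp [h2]
      · have htlt : t < 1 := lt_of_le_of_ne (not_lt.mp h1) h2
        have hinv : 1 < t⁻¹ := (one_lt_inv₀ ht).mpr htlt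
        simp [h1, h2, hinv, inv_inv]
  · intro x₁ hx₁ x₂ hx₂ t ht
    by_cases h1 : 1 < t
    · simpa [h1] using hmain t h1 x₁ hx₁ x₂ hx₂
    · by_cases h2 : t = 1
      · simp [h2]
      · have htlt : t < 1 := lt_of_le_of_ne (not_lt.mp h1) h2
        have hinv : 1 < t⁻¹ := (one_lt_inv₀ ht).mpr htlt
        have htx₁ : (0:ℝ) < t * x₁ := mul_pos ht hx₁
        have htx₂ : (0:ℝ) < t * x₂ := mul_pos ht hx₂
        have hm := hmain t⁻¹ hinv (t * x₁) htx₁ (t * x₂) htx₂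
        have hsimp₁ : t⁻¹ * (t * x₁) = x₁ := by field_simp
        have hsimp₂ : t⁻¹ * (t * x₂) = x₂ := by field_simp
        rw [hsimp₁, hsimp₂] at hm
        have hne := hδ₀ne t⁻¹ hinv
        simp only [h1, h2, if_false]
        rw [hm, inv_mul_cancel_left₀ hne]
end

section
/- Let ξ, ψ: (0,∞) → ℝ be non-constant functions satisfying the hypothesis of the previous lemma, and let x₁, x₂ be such that ξ(x₁) = ξ(x₂). Then for every t > 1, ξ(tx₁) = ξ(tx₂). Conversely, if ξ(tx₁) = ξ(tx₂) for some t > 1 then ξ(x₁) = ξ(x₂). -/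
theorem stmt2 (ξ ψ : ℝ → ℝ)
    (hξ : ∃ x₁ > (0:ℝ), ∃ x₂ > (0:ℝ), ξ x₁ ≠ ξ x₂)
    (hψ : ∃ y₁ > (0:ℝ), ∃ y₂ > (0:ℝ), ψ y₁ ≠ ψ y₂)
    (α β : ℝ → ℝ → ℝ)
    (h : ∀ x > (0:ℝ), ∀ y > (0:ℝ), ∀ t > (1:ℝ),
      ξ (t * x) * ψ (t * y) - ξ x * ψ y = α x t + β y t)
    (x₁ x₂ : ℝ) (hx₁ : 0 < x₁) (hx₂ : 0 < x₂) :
    (ξ x₁ = ξ x₂ → ∀ t > (1:ℝ), ξ (t * x₁) = ξ (t * x₂)) ∧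
    (∀ t > (1:ℝ), ξ (t * x₁) = ξ (t * x₂) → ξ x₁ = ξ x₂) := by
  obtain ⟨y₁, hy₁, y₂, hy₂, hne⟩ := hψ
  have key : ∀ t > (1:ℝ), ∀ y > (0:ℝ), ∀ y' > (0:ℝ),
      (ξ (t*x₁) - ξ (t*x₂)) * (ψ (t*y) - ψ (t*y')) =
      (ξ x₁ - ξ x₂) * (ψ y - ψ y') := by
    intro t ht y hy y' hy'
    have h1 := h x₁ hx₁ y hy t ht
    have h2 := h x₂ hx₂ y hy t ht
    have h3 := h x₁ hx₁ y' hy' t ht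
    have h4 := h x₂ hx₂ y' hy' t ht
    linear_combination h1 - h2 - h3 + h4
  have hsub : ψ y₁ - ψ y₂ ≠ 0 := sub_ne_zero.mpr hne
  constructor
  · intro he t ht
    have ht0 : t ≠ 0 := by linarith
    have k := key t ht (y₁/t) (div_pos hy₁ (by linarith)) (y₂/t)
      (div_pos hy₂ (by linarith))
    rw [mul_div_cancel₀ _ ht0, mul_div_cancel₀ _ ht0, he, sub_self, zero_mul] at k
    have := mul_eq_zero.mp k
    rcases this with h' | h'
    · exact sub_eq_zero.mp h'
    · exact absurd h' hsub
  · intro t ht heq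
    have k := key t ht y₁ hy₁ y₂ hy₂
    rw [heq, sub_self, zero_mul] at k
    rcases mul_eq_zero.mp k.symm with h' | h'
    · exact sub_eq_zero.mp h'
    · exact absurd h' hsub
end

section
/- Let μ ∈ ℝ^d, Θ a symmetric d×d real matrix with Θ·𝟙 = 0, and define g: ℝ^d → ℝ by g(x) = exp(−(μ−𝟙)ᵀx − xᵀΘx). Fix an index k, and suppose Θ^(k) (the principal submatrix deleting row and column k) is positive definite with inverse Σ^(k). Then ∫_{x: x_k > 0} g(x) dx = ((2π)^{(d−1)/2} / det(2Θ^(k))^{1/2}) · exp(¼ (μ−𝟙)_{∖k}ᵀ Σ^(k) (μ−𝟙)_{∖k}) · ∫_0^∞ exp(−(μᵀ𝟙 − d) x_k) dx_k; in particular the integral is finite if and only if μᵀ𝟙 > d. -/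
open Matrix MeasureTheory Real Set
open scoped MatrixOrder

variable {n : ℕ}

-- symmetric sqrt facts
lemma sqrt_symm {A : Matrix (Fin n) (Fin n) ℝ} (hA : A.PosDef) (x : Fin n → ℝ) :
    x ⬝ᵥ (A *ᵥ x) = (CFC.sqrt A *ᵥ x) ⬝ᵥ (CFC.sqrt A *ᵥ x) := by
  set S := CFC.sqrt A with hS
  have h1 : S * S = A := CFC.sqrt_mul_sqrt_self A hA.posSemidef.nonneg
  have h2 : Sᵀ = S := by
    have := (CFC.sqrt_nonneg A).posSemidef.1
    simpa [Matrix.IsHermitian, Matrix.conjTranspose_eq_transpose_of_trivial] using this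
  calc x ⬝ᵥ (A *ᵥ x) = x ⬝ᵥ (S *ᵥ (S *ᵥ x)) := by rw [← h1, ← Matrix.mulVec_mulVec]
    _ = (S *ᵥ x) ⬝ᵥ (S *ᵥ x) := by
        rw [Matrix.dotProduct_mulVec, ← Matrix.mulVec_transpose, h2]

variable {n : ℕ}

lemma exp_dot_eq (y : Fin n → ℝ) :
    Real.exp (-(y ⬝ᵥ y)) = ∏ i, Real.exp (-(1:ℝ) * (y i)^2) := by
  rw [← Real.exp_sum]
  congr 1
  simp [dotProduct, pow_two]

lemma std_gauss_int : Integrable (fun y : Fin n → ℝ => Real.exp (-(y ⬝ᵥ y))) := by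
  simp_rw [exp_dot_eq]
  exact Integrable.fintype_prod (fun _ => integrable_exp_neg_mul_sq one_pos)

lemma std_gauss_val : ∫ y : Fin n → ℝ, Real.exp (-(y ⬝ᵥ y)) = Real.pi ^ ((n : ℝ)/2) := by
  simp_rw [exp_dot_eq]
  rw [volume_pi, integral_fintype_prod_eq_pow (ι := Fin n) (fun t => Real.exp (-(1:ℝ) * t^2)),
    integral_gaussian]
  simp only [Fintype.card_fin, div_one]
  rw [Real.sqrt_eq_rpow, ← Real.rpow_natCast (Real.pi ^ ((1:ℝ)/2)) n, ← Real.rpow_mul Real.pi_nonneg]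
  ring_nf

variable {n : ℕ}

lemma map_mulVec_volume {S : Matrix (Fin n) (Fin n) ℝ} (hdet : S.det ≠ 0) :
    Measure.map (fun x => S *ᵥ x) (volume : Measure (Fin n → ℝ))
      = ENNReal.ofReal |S.det|⁻¹ • volume := by
  have := Real.map_matrix_volume_pi_eq_smul_volume_pi hdet
  rw [abs_inv] at this
  rw [show (fun x : Fin n → ℝ => S *ᵥ x) = ⇑(Matrix.toLin' S) from by ext; simp]
  exact this

lemma mulVec_measurableEmbedding {S : Matrix (Fin n) (Fin n) ℝ} (hdet : S.det ≠ 0) :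
    MeasurableEmbedding (fun x : Fin n → ℝ => S *ᵥ x) := by
  have hinv : Invertible S := S.invertibleOfIsUnitDet (isUnit_iff_ne_zero.2 hdet)
  let e := S.toLinearEquiv' hinv
  have h : (fun x : Fin n → ℝ => S *ᵥ x) = (e.toContinuousLinearEquiv).toHomeomorph := by
    ext x i
    have : e x = Matrix.toLin' S x := by
      rw [← Matrix.toLinearEquiv'_apply S hinv]; rfl
    show (S *ᵥ x) i = (e x) i
    rw [this, Matrix.toLin'_apply]
  rw [h]
  exact (e.toContinuousLinearEquiv).toHomeomorph.measurableEmbedding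

lemma integral_comp_mulVec {S : Matrix (Fin n) (Fin n) ℝ} (hdet : S.det ≠ 0)
    (f : (Fin n → ℝ) → ℝ) :
    ∫ x, f (S *ᵥ x) = |S.det|⁻¹ * ∫ y, f y := by
  rw [← (mulVec_measurableEmbedding hdet).integral_map, map_mulVec_volume hdet,
    integral_smul_measure]
  rw [ENNReal.toReal_ofReal (by positivity)]
  simp

lemma integrable_comp_mulVec {S : Matrix (Fin n) (Fin n) ℝ} (hdet : S.det ≠ 0)
    {f : (Fin n → ℝ) → ℝ} (hf : Integrable f) :
    Integrable (fun x => f (S *ᵥ x)) := by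
  have h := (mulVec_measurableEmbedding hdet).integrable_map_iff
    (g := f) (μ := (volume : Measure (Fin n → ℝ)))
  rw [map_mulVec_volume hdet] at h
  have h2 : Integrable f (ENNReal.ofReal |S.det|⁻¹ • volume) := hf.smul_measure (by simp)
  exact h.mp h2

lemma gauss0_det {A : Matrix (Fin n) (Fin n) ℝ} (hA : A.PosDef) :
    (CFC.sqrt A).det = Real.sqrt A.det := by
  have h1 : (CFC.sqrt A).det * (CFC.sqrt A).det = A.det := by
    rw [← Matrix.det_mul, CFC.sqrt_mul_sqrt_self A hA.posSemidef.nonneg]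
  have h2 : 0 ≤ (CFC.sqrt A).det := by
    rw [(CFC.sqrt_nonneg A).posSemidef.1.det_eq_prod_eigenvalues]
    exact Finset.prod_nonneg fun i _ => by
      simpa using (CFC.sqrt_nonneg A).posSemidef.eigenvalues_nonneg i
  rw [← h1, Real.sqrt_mul_self h2]

lemma gauss0_det_ne {A : Matrix (Fin n) (Fin n) ℝ} (hA : A.PosDef) :
    (CFC.sqrt A).det ≠ 0 := by
  rw [gauss0_det hA]
  exact (Real.sqrt_pos.2 hA.det_pos).ne'

lemma gauss0_int {A : Matrix (Fin n) (Fin n) ℝ} (hA : A.PosDef) :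
    Integrable (fun x : Fin n → ℝ => Real.exp (-(x ⬝ᵥ (A *ᵥ x)))) := by
  simp_rw [sqrt_symm hA]
  exact integrable_comp_mulVec (gauss0_det_ne hA) std_gauss_int

lemma gauss0_val {A : Matrix (Fin n) (Fin n) ℝ} (hA : A.PosDef) :
    ∫ x : Fin n → ℝ, Real.exp (-(x ⬝ᵥ (A *ᵥ x)))
      = Real.pi ^ ((n : ℝ)/2) / Real.sqrt A.det := by
  simp_rw [sqrt_symm hA]
  rw [integral_comp_mulVec (gauss0_det_ne hA) (fun y => Real.exp (-(y ⬝ᵥ y))),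
    std_gauss_val, abs_of_nonneg (gauss0_det hA ▸ Real.sqrt_nonneg A.det), gauss0_det hA]
  ring

lemma complete_square {A : Matrix (Fin n) (Fin n) ℝ} (hA : A.PosDef) (c x : Fin n → ℝ) :
    -(c ⬝ᵥ x) - x ⬝ᵥ (A *ᵥ x)
      = (1/4) * (c ⬝ᵥ (A⁻¹ *ᵥ c))
        - ((x + (1/2 : ℝ) • (A⁻¹ *ᵥ c)) ⬝ᵥ (A *ᵥ (x + (1/2 : ℝ) • (A⁻¹ *ᵥ c)))) := by
  have hAinv : A * A⁻¹ = 1 := Matrix.mul_nonsing_inv A (isUnit_iff_ne_zero.2 hA.det_pos.ne')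
  have hsymmA : Aᵀ = A := by
    have := hA.1
    simpa [Matrix.IsHermitian, Matrix.conjTranspose_eq_transpose_of_trivial] using this
  set m : Fin n → ℝ := (1/2 : ℝ) • (A⁻¹ *ᵥ c) with hm
  have hAm : A *ᵥ m = (1/2 : ℝ) • c := by
    rw [hm, Matrix.mulVec_smul, Matrix.mulVec_mulVec, hAinv, Matrix.one_mulVec]
  have hmAx : ∀ y : Fin n → ℝ, m ⬝ᵥ (A *ᵥ y) = (A *ᵥ m) ⬝ᵥ y := by
    intro y
    rw [Matrix.dotProduct_mulVec, ← Matrix.mulVec_transpose, hsymmA]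
  have expand : (x + m) ⬝ᵥ (A *ᵥ (x + m))
      = x ⬝ᵥ (A *ᵥ x) + c ⬝ᵥ x + m ⬝ᵥ (A *ᵥ m) := by
    simp only [Matrix.mulVec_add, add_dotProduct, dotProduct_add]
    have h1 : m ⬝ᵥ (A *ᵥ x) = (1/2 : ℝ) * (c ⬝ᵥ x) := by
      rw [hmAx, hAm, smul_dotProduct]; simp [smul_eq_mul]
    have h2 : x ⬝ᵥ (A *ᵥ m) = (1/2 : ℝ) * (c ⬝ᵥ x) := by
      rw [hAm, dotProduct_smul, dotProduct_comm]; simp [smul_eq_mul]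
    rw [h1, h2]; ring
  have hmAm : m ⬝ᵥ (A *ᵥ m) = (1/4) * (c ⬝ᵥ (A⁻¹ *ᵥ c)) := by
    rw [hAm, hm]
    simp only [dotProduct_smul, smul_dotProduct, smul_eq_mul]
    rw [dotProduct_comm]
    ring
  rw [expand, hmAm]
  ring

lemma gauss_int {A : Matrix (Fin n) (Fin n) ℝ} (hA : A.PosDef) (c : Fin n → ℝ) :
    Integrable (fun x : Fin n → ℝ => Real.exp (-(c ⬝ᵥ x) - x ⬝ᵥ (A *ᵥ x))) := by
  simp_rw [complete_square hA c, sub_eq_add_neg, Real.exp_add]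
  exact ((gauss0_int hA).comp_add_right ((1/2:ℝ) • (A⁻¹ *ᵥ c))).const_mul _

lemma gauss_val {A : Matrix (Fin n) (Fin n) ℝ} (hA : A.PosDef) (c : Fin n → ℝ) :
    ∫ x : Fin n → ℝ, Real.exp (-(c ⬝ᵥ x) - x ⬝ᵥ (A *ᵥ x))
      = Real.pi ^ ((n : ℝ)/2) / Real.sqrt A.det
          * Real.exp ((1/4) * (c ⬝ᵥ (A⁻¹ *ᵥ c))) := by
  simp_rw [complete_square hA c, sub_eq_add_neg, Real.exp_add]
  rw [MeasureTheory.integral_const_mul]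
  rw [integral_add_right_eq_self (fun x : Fin n → ℝ => Real.exp (-(x ⬝ᵥ (A *ᵥ x))))
    ((1/2:ℝ) • (A⁻¹ *ᵥ c))]
  rw [gauss0_val hA]
  ring

lemma key_alg {d : ℕ} (μ : Fin (d+1) → ℝ) (Θ : Matrix (Fin (d+1)) (Fin (d+1)) ℝ)
    (hsymm : Θ.IsSymm) (hone : Θ *ᵥ 1 = 0) (k : Fin (d+1)) (x : Fin (d+1) → ℝ) :
    -((μ - 1) ⬝ᵥ x) - x ⬝ᵥ (Θ *ᵥ x)
      = -(μ ⬝ᵥ 1 - (d+1)) * x k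
        + (-(((μ - 1) ∘ k.succAbove) ⬝ᵥ (fun i => x (k.succAbove i) - x k))
           - ((fun i => x (k.succAbove i) - x k) ⬝ᵥ
             ((Θ.submatrix k.succAbove k.succAbove) *ᵥ (fun i => x (k.succAbove i) - x k)))) := by
  set σ := k.succAbove with hσ
  set w : Fin d → ℝ := fun i => x (σ i) - x k with hw
  set y : Fin (d+1) → ℝ := x - (x k) • 1 with hy
  have hyk : y k = 0 := by simp [hy]
  have hyσ : ∀ i, y (σ i) = w i := by intro i; simp [hy, hw]
  -- claim 1
  have hμ1 : μ ⬝ᵥ (1 : Fin (d+1) → ℝ) - (d+1) = ∑ j, (μ j - 1) := by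
    rw [Finset.sum_sub_distrib]
    simp [dotProduct]
  have claim1 : (μ - 1) ⬝ᵥ x
      = (μ ⬝ᵥ 1 - (d+1)) * x k + ((μ - 1) ∘ σ) ⬝ᵥ w := by
    rw [hμ1]
    have e1 : (μ - 1) ⬝ᵥ x = ∑ j, (μ j - 1) * x j := by
      simp [dotProduct]
    have e2 : ∑ j, (μ j - 1) * x j
        = (μ k - 1) * x k + ∑ i, (μ (σ i) - 1) * x (σ i) :=
      Fin.sum_univ_succAbove (fun j => (μ j - 1) * x j) k
    have e3 : ∑ j, (μ j - 1) = (μ k - 1) + ∑ i, (μ (σ i) - 1) :=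
      Fin.sum_univ_succAbove (fun j => (μ j - 1)) k
    rw [e1, e2, e3]
    simp only [dotProduct, Function.comp_apply, Pi.sub_apply, Pi.one_apply, hw,
      mul_sub, sub_mul, add_mul, one_mul, mul_one, Finset.sum_sub_distrib, Finset.sum_mul,
      Finset.sum_const, Finset.card_univ, Fintype.card_fin, nsmul_eq_mul]
    ring
  -- claim 2
  have hΘy : Θ *ᵥ x = Θ *ᵥ y := by
    have hx : x = y + (x k) • 1 := by rw [hy, sub_add_cancel]
    rw [hx, Matrix.mulVec_add, Matrix.mulVec_smul, hone]
    simp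
  have h1Θ : (1 : Fin (d+1) → ℝ) ⬝ᵥ (Θ *ᵥ y) = 0 := by
    rw [Matrix.dotProduct_mulVec, ← Matrix.mulVec_transpose, hsymm.eq, hone]
    simp
  have claim2 : x ⬝ᵥ (Θ *ᵥ x) = w ⬝ᵥ ((Θ.submatrix σ σ) *ᵥ w) := by
    rw [hΘy]
    have e0 : x ⬝ᵥ (Θ *ᵥ y) = y ⬝ᵥ (Θ *ᵥ y) := by
      have hx : x = y + (x k) • 1 := by rw [hy, sub_add_cancel]
      rw [hx, add_dotProduct, smul_dotProduct, h1Θ]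
      simp
    rw [e0]
    have e1 : ∀ i, (Θ *ᵥ y) (σ i) = ((Θ.submatrix σ σ) *ᵥ w) i := by
      intro i
      show ∑ j, Θ (σ i) j * y j = ∑ i', (Θ.submatrix σ σ) i i' * w i'
      rw [Fin.sum_univ_succAbove (fun j => Θ (σ i) j * y j) k, hyk]
      simp only [Matrix.submatrix_apply]
      simp [← hσ, hyσ]
    have e2 : y ⬝ᵥ (Θ *ᵥ y) = ∑ j, y j * (Θ *ᵥ y) j := rfl
    rw [e2, Fin.sum_univ_succAbove (fun j => y j * (Θ *ᵥ y) j) k, hyk]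
    simp only [← hσ, hyσ, e1]
    simp [dotProduct]
  rw [claim1, claim2]
  ring
open Matrix MeasureTheory Real Set

noncomputable def shearEquiv (d : ℕ) : (ℝ × (Fin d → ℝ)) ≃ᵐ (ℝ × (Fin d → ℝ)) where
  toFun p := (p.1, p.2 - p.1 • 1)
  invFun p := (p.1, p.2 + p.1 • 1)
  left_inv p := by simp
  right_inv p := by simp
  measurable_toFun :=
    (measurable_fst.prodMk (measurable_snd.sub
      (measurable_fst.smul measurable_const))).comp measurable_id
  measurable_invFun :=
    (measurable_fst.prodMk (measurable_snd.add
      (measurable_fst.smul measurable_const))).comp measurable_id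

lemma shearEquiv_mp (d : ℕ) (ρ : Measure ℝ) [SFinite ρ] :
    MeasurePreserving (shearEquiv d) (ρ.prod volume) (ρ.prod volume) := by
  have h := (MeasurePreserving.id ρ).skew_product
    (g := fun (a : ℝ) (z : Fin d → ℝ) => z - a • 1)
    ((measurable_snd.sub (measurable_fst.smul measurable_const)))
    (ae_of_all _ (fun a => by
      simp_rw [sub_eq_add_neg]
      exact map_add_right_eq_self volume _))
  exact h

lemma exp_ioi_int_iff (b : ℝ) :
    IntegrableOn (fun s => Real.exp (-b * s)) (Ioi (0:ℝ)) ↔ 0 < b := by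
  constructor
  · intro h
    by_contra hb
    push_neg at hb
    have h1 : IntegrableOn (fun _ : ℝ => (1:ℝ)) (Ioi (0:ℝ)) := by
      apply Integrable.mono' h aestronglyMeasurable_const
      filter_upwards [ae_restrict_mem measurableSet_Ioi] with s hs
      rw [norm_one]
      apply Real.one_le_exp
      have : (0:ℝ) < s := hs
      nlinarith
    rw [integrableOn_const_iff] at h1
    rcases h1 with h1 | h1
    · norm_num at h1
    · rw [Real.volume_Ioi] at h1
      exact (lt_irrefl _ h1).elim
  · exact fun hb => exp_neg_integrableOn_Ioi 0 hb

lemma piFinSuccAbove_eval (d : ℕ) (k : Fin (d+1)) (x : Fin (d+1) → ℝ) :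
    MeasurableEquiv.piFinSuccAbove (fun _ : Fin (d+1) => ℝ) k x
      = (x k, fun j => x (k.succAbove j)) := rfl

lemma prod_mul_int_iff {d : ℕ} {g : (Fin d → ℝ) → ℝ} (hg : Integrable g)
    (hgpos : ∀ z, 0 < g z) (hgc : Continuous g) (hI : 0 < ∫ z, g z) (b : ℝ) :
    Integrable (fun p : ℝ × (Fin d → ℝ) => Real.exp (-b * p.1) * g p.2)
      ((volume.restrict (Ioi (0:ℝ))).prod volume)
    ↔ IntegrableOn (fun s => Real.exp (-b * s)) (Ioi (0:ℝ)) := by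
  constructor
  · intro h
    have hmeas : AEStronglyMeasurable
        (fun p : ℝ × (Fin d → ℝ) => Real.exp (-b * p.1) * g p.2)
        ((volume.restrict (Ioi (0:ℝ))).prod volume) :=
      ((Real.continuous_exp.comp (continuous_const.mul continuous_fst)).mul
        (hgc.comp continuous_snd)).aestronglyMeasurable
    have h2 := ((integrable_prod_iff hmeas).1 h).2
    have h3 : (fun s => ∫ z, ‖Real.exp (-b * s) * g z‖)
        = fun s => Real.exp (-b * s) * ∫ z, g z := by
      funext s
      rw [← integral_const_mul]
      congr 1
      funext z
      rw [norm_mul, Real.norm_eq_abs, Real.norm_eq_abs, abs_of_pos (Real.exp_pos _),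
        abs_of_pos (hgpos z)]
    rw [h3] at h2
    have h4 := h2.mul_const (∫ z, g z)⁻¹
    simpa [IntegrableOn, mul_assoc, mul_inv_cancel₀ hI.ne'] using h4
  · intro h
    exact Integrable.mul_prod h hg

lemma const_match (d : ℕ) (A : Matrix (Fin d) (Fin d) ℝ) (hA : A.PosDef) :
    (2 * Real.pi) ^ ((d : ℝ) / 2) / Real.sqrt ((2 • A).det)
      = Real.pi ^ ((d : ℝ)/2) / Real.sqrt A.det := by
  have h2A : (2 • A) = ((2:ℝ) • A) := by
    rw [two_smul, two_smul]
  rw [h2A, Matrix.det_smul, Fintype.card_fin]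
  rw [Real.sqrt_mul (by positivity) A.det]
  rw [Real.mul_rpow (by norm_num) Real.pi_nonneg]
  have h22 : Real.sqrt ((2:ℝ)^d) = (2:ℝ) ^ ((d:ℝ)/2) := by
    rw [Real.sqrt_eq_rpow, ← Real.rpow_natCast 2 d, ← Real.rpow_mul (by norm_num),
      mul_one_div]
  rw [h22, mul_div_mul_left _ _ (ne_of_gt (Real.rpow_pos_of_pos two_pos _))]

theorem stmt8 (d : ℕ) (μ : Fin (d+1) → ℝ) (Θ : Matrix (Fin (d+1)) (Fin (d+1)) ℝ)
    (hsymm : Θ.IsSymm) (hone : Θ *ᵥ 1 = 0) (k : Fin (d+1))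
    (hk : (Θ.submatrix k.succAbove k.succAbove).PosDef) :
    (∫ x in {x : Fin (d+1) → ℝ | 0 < x k},
        Real.exp (-((μ - 1) ⬝ᵥ x) - x ⬝ᵥ (Θ *ᵥ x)))
      = (2 * Real.pi) ^ ((d : ℝ) / 2)
          / Real.sqrt ((2 • Θ.submatrix k.succAbove k.succAbove).det)
        * Real.exp ((1/4) * (((μ - 1) ∘ k.succAbove) ⬝ᵥ
            ((Θ.submatrix k.succAbove k.succAbove)⁻¹ *ᵥ ((μ - 1) ∘ k.succAbove))))
        * ∫ s in Set.Ioi (0:ℝ), Real.exp (-(μ ⬝ᵥ 1 - (d+1)) * s)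
    ∧ (IntegrableOn (fun x : Fin (d+1) → ℝ =>
          Real.exp (-((μ - 1) ⬝ᵥ x) - x ⬝ᵥ (Θ *ᵥ x))) {x | 0 < x k}
        ↔ (d + 1 : ℝ) < μ ⬝ᵥ 1) := by
  set A := Θ.submatrix k.succAbove k.succAbove with hAdef
  set c : Fin d → ℝ := (μ - 1) ∘ k.succAbove with hcdef
  set b : ℝ := μ ⬝ᵥ 1 - ((d:ℝ)+1) with hbdef
  set g : (Fin d → ℝ) → ℝ := fun z => Real.exp (-(c ⬝ᵥ z) - z ⬝ᵥ (A *ᵥ z)) with hgdef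
  set T := MeasurableEquiv.piFinSuccAbove (fun _ : Fin (d+1) => ℝ) k with hTdef
  have hFP : ∀ x : Fin (d+1) → ℝ,
      Real.exp (-((μ - 1) ⬝ᵥ x) - x ⬝ᵥ (Θ *ᵥ x))
        = (fun p : ℝ × (Fin d → ℝ) => Real.exp (-b * p.1) * g p.2)
            (shearEquiv d (T x)) := by
    intro x
    rw [key_alg μ Θ hsymm hone k x, Real.exp_add]
    have hTx : T x = (x k, fun j => x (k.succAbove j)) := rfl
    rw [hTx]
    show _ = Real.exp (-b * x k)
      * g ((fun j => x (k.succAbove j)) - (x k) • 1)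
    have hvec : ((fun j => x (k.succAbove j)) - (x k) • (1 : Fin d → ℝ))
        = fun i => x (k.succAbove i) - x k := by
      funext i; simp
    rw [hvec, hgdef, hbdef]
  have hgint : Integrable g := gauss_int hk c
  have hgc : Continuous g := by
    apply Real.continuous_exp.comp
    simp only [dotProduct, Matrix.mulVec]
    apply Continuous.sub
    · exact (continuous_finset_sum _ fun i _ =>
        continuous_const.mul (continuous_apply i)).neg
    · exact continuous_finset_sum _ fun i _ => (continuous_apply i).mul
        (continuous_finset_sum _ fun j _ => continuous_const.mul (continuous_apply j))
  have hgpos : ∀ z, 0 < g z := fun z => Real.exp_pos _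
  have hIg : ∫ z, g z
      = Real.pi ^ ((d : ℝ)/2) / Real.sqrt A.det
        * Real.exp ((1/4) * (c ⬝ᵥ (A⁻¹ *ᵥ c))) := gauss_val hk c
  have hIgpos : 0 < ∫ z, g z := by
    rw [hIg]
    have := hk.det_pos
    positivity
  have hTmp : MeasurePreserving T volume volume :=
    volume_preserving_piFinSuccAbove (fun _ : Fin (d+1) => ℝ) k
  have hpre : T ⁻¹' ((Ioi (0:ℝ)) ×ˢ (univ : Set (Fin d → ℝ))) = {x | 0 < x k} := by
    ext x
    simp [hTdef, piFinSuccAbove_eval, Set.mem_prod]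
  have hbox : MeasurableSet ((Ioi (0:ℝ)) ×ˢ (univ : Set (Fin d → ℝ))) :=
    measurableSet_Ioi.prod MeasurableSet.univ
  have hT1 : MeasurePreserving T (volume.restrict {x | 0 < x k})
      ((volume : Measure (ℝ × (Fin d → ℝ))).restrict ((Ioi (0:ℝ)) ×ˢ univ)) := by
    rw [← hpre]
    exact hTmp.restrict_preimage hbox
  have hprodres : (volume : Measure (ℝ × (Fin d → ℝ))).restrict ((Ioi (0:ℝ)) ×ˢ univ)
      = (volume.restrict (Ioi (0:ℝ))).prod volume := by
    rw [Measure.volume_eq_prod, ← Measure.prod_restrict, Measure.restrict_univ]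
  have hshear := shearEquiv_mp d (volume.restrict (Ioi (0:ℝ)))
  constructor
  · calc ∫ x in {x : Fin (d+1) → ℝ | 0 < x k},
        Real.exp (-((μ - 1) ⬝ᵥ x) - x ⬝ᵥ (Θ *ᵥ x))
        = ∫ x in {x : Fin (d+1) → ℝ | 0 < x k},
            (fun p : ℝ × (Fin d → ℝ) => Real.exp (-b * p.1) * g p.2)
              (shearEquiv d (T x)) := by simp_rw [hFP]
      _ = ∫ p in (Ioi (0:ℝ)) ×ˢ univ,
            (fun p : ℝ × (Fin d → ℝ) => Real.exp (-b * p.1) * g p.2)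
              (shearEquiv d p) :=
        hT1.integral_comp T.measurableEmbedding
          (fun p => (fun q : ℝ × (Fin d → ℝ) => Real.exp (-b * q.1) * g q.2)
            (shearEquiv d p))
      _ = ∫ p, (fun p : ℝ × (Fin d → ℝ) => Real.exp (-b * p.1) * g p.2)
              (shearEquiv d p) ∂((volume.restrict (Ioi (0:ℝ))).prod volume) := by
        rw [← hprodres]
      _ = ∫ p, Real.exp (-b * p.1) * g p.2
            ∂((volume.restrict (Ioi (0:ℝ))).prod volume) :=
        hshear.integral_comp (shearEquiv d).measurableEmbedding
          (fun p => Real.exp (-b * p.1) * g p.2)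
      _ = (∫ s in Ioi (0:ℝ), Real.exp (-b * s)) * ∫ z, g z :=
        integral_prod_mul (fun s => Real.exp (-b * s)) g
      _ = (2 * Real.pi) ^ ((d : ℝ) / 2) / Real.sqrt ((2 • A).det)
          * Real.exp ((1/4) * (c ⬝ᵥ (A⁻¹ *ᵥ c)))
          * ∫ s in Set.Ioi (0:ℝ), Real.exp (-b * s) := by
        rw [hIg, const_match d A hk]
        ring
  · have step1 : IntegrableOn (fun x : Fin (d+1) → ℝ =>
        Real.exp (-((μ - 1) ⬝ᵥ x) - x ⬝ᵥ (Θ *ᵥ x))) {x | 0 < x k}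
        ↔ Integrable ((fun p : ℝ × (Fin d → ℝ) => Real.exp (-b * p.1) * g p.2)
            ∘ (shearEquiv d) ∘ T) (volume.restrict {x | 0 < x k}) := by
      unfold IntegrableOn
      constructor
      · intro h; exact h.congr (ae_of_all _ (fun x => (hFP x)))
      · intro h; exact h.congr (ae_of_all _ (fun x => (hFP x).symm))
    rw [step1]
    rw [show ((fun p : ℝ × (Fin d → ℝ) => Real.exp (-b * p.1) * g p.2)
            ∘ (shearEquiv d) ∘ T)
        = (((fun p : ℝ × (Fin d → ℝ) => Real.exp (-b * p.1) * g p.2)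
            ∘ (shearEquiv d)) ∘ T) from rfl]
    rw [hT1.integrable_comp_emb T.measurableEmbedding, hprodres,
      hshear.integrable_comp_emb (shearEquiv d).measurableEmbedding,
      prod_mul_int_iff hgint hgpos hgc hIgpos b, exp_ioi_int_iff b, hbdef]
    exact sub_pos
end

section
/- Let Θ be a symmetric d×d matrix with Θ·𝟙 = 0, k an index with Θ^(k) := Θ_{∖k,∖k} invertible, Σ^(k) := (Θ^(k))⁻¹, and μ ∈ ℝ^d. Define β^(k)(s) := ½ Σ^(k)(𝟙−μ)_{∖k} + s·𝟙_{∖k} for s ∈ ℝ. Then β^(k)(s)ᵀ Θ^(k) β^(k)(s) + (1 − μ_k)s − Θ_{kk}s² = −(μᵀ𝟙 − d)s + ¼(μ−𝟙)_{∖k}ᵀ Σ^(k) (μ−𝟙)_{∖k}. -/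
open Matrix

theorem stmt9 (d : ℕ) (Θ : Matrix (Fin (d+1)) (Fin (d+1)) ℝ)
    (hsymm : Θ.IsSymm) (hone : Θ *ᵥ 1 = 0) (k : Fin (d+1))
    (hinv : IsUnit (Θ.submatrix k.succAbove k.succAbove).det)
    (μ : Fin (d+1) → ℝ) (s : ℝ) :
    ((1/2 : ℝ) • ((Θ.submatrix k.succAbove k.succAbove)⁻¹ *ᵥ
        (((1 : Fin (d+1) → ℝ) - μ) ∘ k.succAbove)) + s • (1 : Fin d → ℝ)) ⬝ᵥ
      ((Θ.submatrix k.succAbove k.succAbove) *ᵥ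
        ((1/2 : ℝ) • ((Θ.submatrix k.succAbove k.succAbove)⁻¹ *ᵥ
          (((1 : Fin (d+1) → ℝ) - μ) ∘ k.succAbove)) + s • (1 : Fin d → ℝ)))
      + (1 - μ k) * s - Θ k k * s ^ 2
    = -(μ ⬝ᵥ 1 - (d + 1)) * s
      + (1/4) * (((μ - 1) ∘ k.succAbove) ⬝ᵥ
          ((Θ.submatrix k.succAbove k.succAbove)⁻¹ *ᵥ ((μ - 1) ∘ k.succAbove))) := by
  set A := Θ.submatrix k.succAbove k.succAbove with hAdef
  set v : Fin d → ℝ := ((1 : Fin (d+1) → ℝ) - μ) ∘ k.succAbove with hvdef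
  set u : Fin d → ℝ := A⁻¹ *ᵥ v with hudef
  have hAB : A * A⁻¹ = 1 := mul_nonsing_inv A hinv
  have hAsymm : Aᵀ = A := by
    rw [hAdef, transpose_submatrix, hsymm.eq]
  have hAu : A *ᵥ u = v := by
    rw [hudef, mulVec_mulVec, hAB, one_mulVec]
  -- symmetry of the bilinear form
  have hbil : ∀ x y : Fin d → ℝ, x ⬝ᵥ (A *ᵥ y) = y ⬝ᵥ (A *ᵥ x) := by
    intro x y
    rw [dotProduct_mulVec, ← mulVec_transpose, hAsymm, dotProduct_comm]
  -- row sums of Θ vanish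
  have hrow : ∀ i, ∑ j, Θ i j = 0 := by
    intro i
    have := congrFun hone i
    simpa [mulVec, dotProduct] using this
  have hcol : ∀ j, ∑ i, Θ i j = 0 := by
    intro j
    calc ∑ i, Θ i j = ∑ i, Θ j i := by
          refine Finset.sum_congr rfl fun i _ => ?_
          exact (hsymm.apply j i).symm ▸ rfl
      _ = 0 := hrow j
  -- A *ᵥ 1 in coordinates
  have hA1 : ∀ i, (A *ᵥ (1 : Fin d → ℝ)) i = -Θ (k.succAbove i) k := by
    intro i
    have h := Fin.sum_univ_succAbove (fun j => Θ (k.succAbove i) j) k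
    have h0 := hrow (k.succAbove i)
    simp only [mulVec, dotProduct, hAdef, submatrix_apply, Pi.one_apply, mul_one]
    linarith [h, h0]
  have h1A1 : (1 : Fin d → ℝ) ⬝ᵥ (A *ᵥ (1 : Fin d → ℝ)) = Θ k k := by
    have h : ∑ i : Fin (d+1), Θ i k = Θ k k + ∑ i : Fin d, Θ (k.succAbove i) k :=
      Fin.sum_univ_succAbove _ k
    have h0 := hcol k
    calc (1 : Fin d → ℝ) ⬝ᵥ (A *ᵥ (1 : Fin d → ℝ))
        = ∑ i, (A *ᵥ (1 : Fin d → ℝ)) i := by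
          simp [dotProduct]
      _ = ∑ i, -Θ (k.succAbove i) k := by
          exact Finset.sum_congr rfl fun i _ => hA1 i
      _ = -(∑ i : Fin d, Θ (k.succAbove i) k) := by rw [Finset.sum_neg_distrib]
      _ = Θ k k := by linarith [h, h0]
  -- sum of v
  have hv1 : v ⬝ᵥ (1 : Fin d → ℝ) = ((d : ℝ) + 1) - μ ⬝ᵥ 1 - (1 - μ k) := by
    have h := Fin.sum_univ_succAbove (fun i => 1 - μ i) k
    have hμ : μ ⬝ᵥ (1 : Fin (d+1) → ℝ) = ∑ i, μ i := by simp [dotProduct]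
    have hsum : ∑ i : Fin (d+1), (1 - μ i) = ((d : ℝ) + 1) - ∑ i, μ i := by
      rw [Finset.sum_sub_distrib]
      simp
    calc v ⬝ᵥ (1 : Fin d → ℝ) = ∑ i : Fin d, (1 - μ (k.succAbove i)) := by
          simp [dotProduct, hvdef]
      _ = ((d : ℝ) + 1) - μ ⬝ᵥ 1 - (1 - μ k) := by
          rw [hμ]; linarith [h, hsum]
  -- u ⬝ᵥ (A *ᵥ 1) = v ⬝ᵥ 1
  have huA1 : u ⬝ᵥ (A *ᵥ (1 : Fin d → ℝ)) = v ⬝ᵥ (1 : Fin d → ℝ) := by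
    rw [hbil, hAu, dotProduct_comm]
  -- the negated vector on RHS
  have hneg : ((μ - 1) ∘ k.succAbove) = -v := by
    funext i
    simp [hvdef]
  -- main expansion
  rw [hneg]
  have hrhs : (-v) ⬝ᵥ (A⁻¹ *ᵥ (-v)) = v ⬝ᵥ u := by
    rw [mulVec_neg, neg_dotProduct, dotProduct_neg, neg_neg, hudef]
  rw [hrhs]
  have hlhs : ((1/2 : ℝ) • u + s • (1 : Fin d → ℝ)) ⬝ᵥ
      (A *ᵥ ((1/2 : ℝ) • u + s • (1 : Fin d → ℝ)))
      = (1/4) * (v ⬝ᵥ u) + s * (v ⬝ᵥ (1 : Fin d → ℝ)) + s^2 * Θ k k := by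
    rw [mulVec_add, mulVec_smul, mulVec_smul, hAu]
    simp only [dotProduct_add, add_dotProduct, dotProduct_smul, smul_dotProduct,
      smul_eq_mul]
    have h2 : (1 : Fin d → ℝ) ⬝ᵥ v = v ⬝ᵥ (1 : Fin d → ℝ) := dotProduct_comm _ _
    have h3 : u ⬝ᵥ v = v ⬝ᵥ u := dotProduct_comm _ _
    rw [huA1, h1A1, h2, h3]
    ring
  rw [hlhs, hv1]
  ring
end

section
/- Let T₁, …, T_d: (0,∞) → ℝ (d ≥ 3) be non-constant measurable functions such that for each i there exists δᵢ: (0,∞) → ℝ with Tᵢ(ty₁) − Tᵢ(ty₂) = δᵢ(t)(Tᵢ(y₁) − Tᵢ(y₂)) for all y₁, y₂, t > 0, and suppose δᵢ(t)δⱼ(t) = 1 for all i ≠ j and t > 1. Then each Tᵢ has the form Tᵢ(y) = cᵢ log y + Tᵢ(1) for some cᵢ ∈ ℝ. -/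
open MeasureTheory Pointwise

/-- Measurable Cauchy functional equation: a measurable additive `f : ℝ → ℝ` is linear. -/
lemma measurable_cauchy_linear (f : ℝ → ℝ) (hf : Measurable f)
    (hadd : ∀ x y, f (x + y) = f x + f y) : ∃ c : ℝ, ∀ x, f x = c * x := by
  have f0 : f 0 = 0 := by have := hadd 0 0; simpa using this.symm
  set φ : ℝ →+ ℝ := AddMonoidHom.mk' f hadd with hφ
  -- find n with positive measure set where |f| ≤ n
  have hmeasA : ∀ n : ℕ, MeasurableSet {x : ℝ | |f x| ≤ n} :=
    fun n => measurableSet_le hf.abs measurable_const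
  obtain ⟨n, hn⟩ : ∃ n : ℕ, 0 < volume ({x : ℝ | |f x| ≤ n} ∩ Set.Icc 0 1) := by
    by_contra h
    push_neg at h
    have hsub : Set.Icc (0:ℝ) 1 ⊆ ⋃ n : ℕ, ({x : ℝ | |f x| ≤ n} ∩ Set.Icc 0 1) := by
      intro x hx
      obtain ⟨n, hn⟩ := exists_nat_ge (|f x|)
      exact Set.mem_iUnion.2 ⟨n, ⟨hn, hx⟩⟩
    have h0 : volume (⋃ n : ℕ, ({x : ℝ | |f x| ≤ n} ∩ Set.Icc 0 1)) = 0 := by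
      rw [measure_iUnion_null_iff (μ := (volume : Measure ℝ))]
      exact fun n => le_antisymm (h n) zero_le
    have := measure_mono (μ := (volume : Measure ℝ)) hsub
    rw [h0] at this
    simp [Real.volume_Icc] at this
  set A := {x : ℝ | |f x| ≤ n} ∩ Set.Icc (0:ℝ) 1 with hA
  have hAmeas : MeasurableSet A := (hmeasA n).inter measurableSet_Icc
  have hstein : A - A ∈ nhds (0:ℝ) :=
    MeasureTheory.Measure.sub_mem_nhds_zero_of_addHaar_pos volume A hAmeas hn
  obtain ⟨δ, hδpos, hball⟩ := Metric.mem_nhds_iff.1 hstein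
  -- |f| bounded by 2n on ball 0 δ
  have hbound : ∀ x : ℝ, |x| < δ → |f x| ≤ 2 * n := by
    intro x hx
    have hmem : x ∈ A - A := hball (by simpa [Real.dist_eq] using hx)
    obtain ⟨a, ha, b, hb, hab⟩ := Set.mem_sub.1 hmem
    have : f a = f x + f b := by rw [← hadd]; rw [← hab]; ring_nf
    have hfx : f x = f a - f b := by linarith
    have h1 : |f a| ≤ n := ha.1
    have h2 : |f b| ≤ n := hb.1
    calc |f x| = |f a - f b| := by rw [hfx]
      _ ≤ |f a| + |f b| := abs_sub _ _
      _ ≤ 2 * n := by linarith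
  -- f(m x) = m f(x)
  have hsmul : ∀ (m : ℕ) (x : ℝ), f (m * x) = m * f x := by
    intro m x
    induction m with
    | zero => simpa using f0
    | succ k ih => push_cast; rw [add_mul, add_mul, one_mul, one_mul, hadd, ih]
  -- continuity at 0
  have hcont0 : Filter.Tendsto f (nhds 0) (nhds 0) := by
    rw [Metric.tendsto_nhds_nhds]
    intro ε hε
    obtain ⟨m, hm⟩ := exists_nat_gt (2 * n / ε)
    have hm0 : 0 < (m : ℝ) := lt_of_le_of_lt (div_nonneg (by positivity) hε.le) hm
    refine ⟨δ / m, by positivity, fun {x} hx => ?_⟩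
    rw [Real.dist_eq, sub_zero] at hx ⊢
    have hmx : |(m : ℝ) * x| < δ := by
      rw [abs_mul, abs_of_pos hm0]
      calc (m : ℝ) * |x| < m * (δ / m) := by
            exact mul_lt_mul_of_pos_left hx hm0
        _ = δ := by field_simp
    have := hbound _ hmx
    rw [hsmul m x, abs_mul, abs_of_pos hm0] at this
    have h2 : |f x| ≤ 2 * n / m := by
      rw [le_div_iff₀ hm0]; linarith [this]
    calc |f x| ≤ 2 * n / m := h2
      _ < ε := by
        rw [div_lt_iff₀ hm0]
        have := (div_lt_iff₀ hε).1 hm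
        nlinarith
  -- full continuity
  have hcont : Continuous f := by
    rw [continuous_iff_continuousAt]
    intro x₀
    have key : ∀ y, f y = f (y - x₀) + f x₀ := by
      intro y; rw [← hadd]; ring_nf
    have h1 : Filter.Tendsto (fun y => f (y - x₀) + f x₀) (nhds x₀) (nhds (f x₀)) := by
      have h2 : Filter.Tendsto (fun y : ℝ => y - x₀) (nhds x₀) (nhds 0) := by
        have h3 : Filter.Tendsto (fun y : ℝ => y - x₀) (nhds x₀) (nhds (x₀ - x₀)) :=
          Filter.Tendsto.sub_const Filter.tendsto_id x₀
        simpa using h3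
      have := (hcont0.comp h2).add_const (f x₀)
      simpa using this
    exact Filter.Tendsto.congr (fun y => (key y).symm) h1
  -- linearity
  refine ⟨f 1, fun x => ?_⟩
  have := (φ.toRealLinearMap hcont).map_smul x 1
  simp only [smul_eq_mul, mul_one] at this
  have hφf : ∀ y, φ.toRealLinearMap hcont y = f y := fun y => rfl
  rw [hφf, hφf] at this
  rw [this, mul_comm]

theorem stmt13 (d : ℕ) (hd : 3 ≤ d) (T : Fin d → ℝ → ℝ)
    (hmeas : ∀ i, Measurable (T i))
    (hnc : ∀ i, ∃ y₁ > (0:ℝ), ∃ y₂ > (0:ℝ), T i y₁ ≠ T i y₂)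
    (δ : Fin d → ℝ → ℝ)
    (hδ : ∀ i, ∀ y₁ > (0:ℝ), ∀ y₂ > (0:ℝ), ∀ t > (0:ℝ),
      T i (t * y₁) - T i (t * y₂) = δ i t * (T i y₁ - T i y₂))
    (hpair : ∀ i j, i ≠ j → ∀ t > (1:ℝ), δ i t * δ j t = 1) :
    ∀ i, ∃ c : ℝ, ∀ y > (0:ℝ), T i y = c * Real.log y + T i 1 := by
  -- multiplicativity of each δ i
  have hdiff : ∀ i, ∃ y₁ > (0:ℝ), ∃ y₂ > (0:ℝ), T i y₁ - T i y₂ ≠ 0 := by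
    intro i
    obtain ⟨y₁, h1, y₂, h2, hne⟩ := hnc i
    exact ⟨y₁, h1, y₂, h2, sub_ne_zero.2 hne⟩
  have hmul : ∀ i, ∀ s > (0:ℝ), ∀ t > (0:ℝ), δ i (s * t) = δ i s * δ i t := by
    intro i s hs t ht
    obtain ⟨y₁, h1, y₂, h2, hne⟩ := hdiff i
    have e1 := hδ i y₁ h1 y₂ h2 (s * t) (by positivity)
    have e2 := hδ i (t * y₁) (by positivity) (t * y₂) (by positivity) s hs
    have e3 := hδ i y₁ h1 y₂ h2 t ht
    rw [show s * t * y₁ = s * (t * y₁) by ring, show s * t * y₂ = s * (t * y₂) by ring] at e1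
    rw [e2, e3] at e1
    have : (δ i (s * t) - δ i s * δ i t) * (T i y₁ - T i y₂) = 0 := by linarith
    rcases mul_eq_zero.1 this with h | h
    · linarith
    · exact absurd h hne
  -- δ i t = 1 for all t > 0
  have hone : ∀ i, ∀ t > (0:ℝ), δ i t = 1 := by
    intro i t ht
    -- first prove for t > 1
    have key : ∀ s > (1:ℝ), δ i s = 1 := by
      intro s hs
      -- pick j k distinct from i and each other
      obtain ⟨j, hj, k, hk, hjk⟩ : ∃ j, j ≠ i ∧ ∃ k, k ≠ i ∧ j ≠ k := by
        have hcard : 1 < (Finset.univ.erase i).card := by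
          rw [Finset.card_erase_of_mem (Finset.mem_univ i)]
          simp only [Finset.card_univ, Fintype.card_fin]
          omega
        obtain ⟨a, ha, b, hb, hab⟩ := Finset.one_lt_card.1 hcard
        exact ⟨a, Finset.ne_of_mem_erase ha, b, Finset.ne_of_mem_erase hb, hab⟩
      have hij := hpair i j (Ne.symm hj) s hs
      have hik := hpair i k (Ne.symm hk) s hs
      have hjk' := hpair j k hjk s hs
      have hsq : δ i s ^ 2 = 1 := by
        have : (δ i s * δ j s) * (δ i s * δ k s) = δ i s ^ 2 * (δ j s * δ k s) := by ring
        rw [hij, hik, hjk'] at this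
        linarith
      have hpos : 0 ≤ δ i s := by
        have hr : Real.sqrt s > 0 := Real.sqrt_pos.2 (by linarith)
        have heq : δ i s = δ i (Real.sqrt s) ^ 2 := by
          have := hmul i (Real.sqrt s) hr (Real.sqrt s) hr
          rw [Real.mul_self_sqrt (by linarith)] at this
          rw [this]; ring
        rw [heq]; positivity
      have hfac : (δ i s - 1) * (δ i s + 1) = 0 := by nlinarith [hsq]
      rcases mul_eq_zero.1 hfac with h | h
      · linarith
      · linarith
    rcases lt_trichotomy t 1 with hlt | heq | hgt
    · have hinv : (1:ℝ) < t⁻¹ := by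
        rw [lt_inv_comm₀ (by norm_num) ht]; simpa using hlt
      have h1 : δ i (t * t⁻¹) = δ i t * δ i t⁻¹ := hmul i t ht t⁻¹ (by positivity)
      rw [mul_inv_cancel₀ (ne_of_gt ht)] at h1
      have hδ1 : δ i 1 = 1 := by
        obtain ⟨y₁, hy1, y₂, hy2, hne⟩ := hdiff i
        have := hδ i y₁ hy1 y₂ hy2 1 (by norm_num)
        simp only [one_mul] at this
        have h0 : (δ i 1 - 1) * (T i y₁ - T i y₂) = 0 := by linarith
        rcases mul_eq_zero.1 h0 with h | h
        · linarith
        · exact absurd h hne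
      rw [hδ1, key t⁻¹ hinv, mul_one] at h1
      exact h1.symm
    · subst heq
      obtain ⟨y₁, hy1, y₂, hy2, hne⟩ := hdiff i
      have := hδ i y₁ hy1 y₂ hy2 1 (by norm_num)
      simp only [one_mul] at this
      have h0 : (δ i 1 - 1) * (T i y₁ - T i y₂) = 0 := by linarith
      rcases mul_eq_zero.1 h0 with h | h
      · linarith
      · exact absurd h hne
    · exact key t hgt
  -- now the Cauchy step
  intro i
  set f : ℝ → ℝ := fun x => T i (Real.exp x) - T i 1 with hf
  have hfmeas : Measurable f := ((hmeas i).comp Real.measurable_exp).sub measurable_const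
  have hfadd : ∀ x y, f (x + y) = f x + f y := by
    intro x y
    have := hδ i (Real.exp y) (Real.exp_pos y) 1 (by norm_num) (Real.exp x) (Real.exp_pos x)
    rw [hone i (Real.exp x) (Real.exp_pos x), one_mul, mul_one] at this
    simp only [hf]
    rw [Real.exp_add]
    linarith [this]
  obtain ⟨c, hc⟩ := measurable_cauchy_linear f hfmeas hfadd
  refine ⟨c, fun y hy => ?_⟩
  have := hc (Real.log y)
  simp only [hf] at this
  rw [Real.exp_log hy] at this
  linarith
end

section
/- Let d ≥ 3 and suppose f: 𝓛 → [0,∞) is a probability density of the form f(y) = Z⁻¹ exp(−Σᵢ μᵢᵀSᵢ(yᵢ) − Σᵢ Σⱼ Θᵢⱼ Tᵢ(yᵢ)Tⱼ(yⱼ)) on 𝓛 := [0,∞)^d ∖ [0,1]^d, with Θ symmetric, the Tᵢ measurable and non-constant, and suppose f satisfies f(ty) = t^{−(d+1)}f(y) for all y ∈ 𝓛, t ≥ 1, and that all off-diagonal entries Θᵢⱼ (i ≠ j) are nonzero. Then each Tᵢ is of the form Tᵢ(y) = cᵢ log y + Tᵢ(1) for constants cᵢ, Tᵢ(1) ∈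 ℝ. -/
open Matrix MeasureTheory Pointwise

theorem aux_cauchy (g : ℝ → ℝ) (hmeas : Measurable g)
    (hadd : ∀ a b : ℝ, g (a + b) = g a + g b) : ∀ x : ℝ, g x = g 1 * x := by
  set G : ℝ →+ ℝ := AddMonoidHom.mk' g hadd with hG
  have hGg : ∀ x, G x = g x := fun _ => rfl
  -- find a set of positive measure where |g| is bounded
  have hcover : (Set.univ : Set ℝ) = ⋃ n : ℕ, {x | |g x| ≤ n} := by
    ext x
    simp only [Set.mem_univ, Set.mem_iUnion, Set.mem_setOf_eq, true_iff]
    exact exists_nat_ge |g x|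
  have hex : ∃ n : ℕ, 0 < volume {x : ℝ | |g x| ≤ n} := by
    by_contra h
    push_neg at h
    have h0 : volume (⋃ n : ℕ, {x : ℝ | |g x| ≤ n}) = 0 :=
      measure_iUnion_null fun n => nonpos_iff_eq_zero.mp (h n)
    rw [← hcover, Real.volume_univ] at h0
    simp at h0
  obtain ⟨n, hn⟩ := hex
  have hAmeas : MeasurableSet {x : ℝ | |g x| ≤ n} := measurableSet_le hmeas.abs measurable_const
  have hsub := Measure.sub_mem_nhds_zero_of_addHaar_pos volume {x : ℝ | |g x| ≤ n} hAmeas hn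
  have hbound : ∀ x ∈ {x : ℝ | |g x| ≤ n} - {x : ℝ | |g x| ≤ n}, |g x| ≤ 2 * n := by
    rintro x ⟨a, ha, b, hb, rfl⟩
    have h1 : g (a - b) = g a - g b := by
      have := hadd (a - b) b
      simp only [sub_add_cancel] at this
      linarith
    rw [h1]
    have := abs_sub (g a) (g b)
    calc |g a - g b| ≤ |g a| + |g b| := abs_sub _ _
      _ ≤ 2 * n := by
          have := Set.mem_setOf_eq ▸ ha
          have := Set.mem_setOf_eq ▸ hb
          simp only [Set.mem_setOf_eq] at ha hb
          linarith
  -- continuity at 0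
  have hg0 : g 0 = 0 := by have := hadd 0 0; simp at this; linarith
  have hc0 : ContinuousAt g 0 := by
    rw [ContinuousAt, hg0, NormedAddCommGroup.tendsto_nhds_zero]
    intro ε hε
    obtain ⟨m, hm⟩ := exists_nat_gt (2 * (n : ℝ) / ε)
    have hm0 : (0 : ℝ) < m := lt_of_le_of_lt (by positivity) hm
    have hU : (fun x : ℝ => (m : ℝ) * x) ⁻¹'
        ({x : ℝ | |g x| ≤ n} - {x : ℝ | |g x| ≤ n}) ∈ nhds (0 : ℝ) := by
      apply ContinuousAt.preimage_mem_nhds (by fun_prop)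
      simpa using hsub
    filter_upwards [hU] with x hx
    have hgm : g ((m : ℝ) * x) = (m : ℝ) * g x := by
      have := map_nsmul G m x
      simpa [nsmul_eq_mul, hGg] using this
    have h1 : |g ((m : ℝ) * x)| ≤ 2 * n := hbound _ hx
    rw [hgm, abs_mul, abs_of_nonneg hm0.le] at h1
    have h2 : 2 * (n : ℝ) < m * ε := by
      rw [div_lt_iff₀ hε] at hm; linarith
    have h3 : (m : ℝ) * |g x| < m * ε := lt_of_le_of_lt h1 h2
    have := (mul_lt_mul_iff_right₀ hm0).mp h3
    simpa [Real.norm_eq_abs] using this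
  have hcont : Continuous g := continuous_of_continuousAt_zero G hc0
  intro x
  have h := (G.toRealLinearMap hcont).map_smul x (1 : ℝ)
  simp only [AddMonoidHom.coe_toRealLinearMap, smul_eq_mul, mul_one,
    LinearMap.smul_apply] at h
  change G x = x * G 1 at h
  rw [hGg, hGg] at h
  rw [h]
  ring


def Vv {d : ℕ} (i j : Fin d) (c x y : ℝ) : Fin d → ℝ :=
  fun l => if l = i then x else if l = j then y else c

theorem aux_ddE {d : ℕ} (i j : Fin d) (hij : i ≠ j) (g : Fin d → ℝ → ℝ)
    (c x₁ x₂ y₁ y₂ : ℝ) :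
    (∑ l, g l (Vv i j c x₁ y₁ l)) - (∑ l, g l (Vv i j c x₁ y₂ l))
      - (∑ l, g l (Vv i j c x₂ y₁ l)) + (∑ l, g l (Vv i j c x₂ y₂ l)) = 0 := by
  rw [← Finset.sum_sub_distrib, ← Finset.sum_sub_distrib, ← Finset.sum_add_distrib]
  apply Finset.sum_eq_zero
  intro l _
  by_cases hli : l = i <;> by_cases hlj : l = j <;> simp_all [Vv] <;> ring

theorem aux_ddQ {d : ℕ} (i j : Fin d) (hij : i ≠ j) (T : Fin d → ℝ → ℝ)
    (Θ : Matrix (Fin d) (Fin d) ℝ) (c x₁ x₂ y₁ y₂ : ℝ) :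
    (∑ l, ∑ m, Θ l m * T l (Vv i j c x₁ y₁ l) * T m (Vv i j c x₁ y₁ m))
      - (∑ l, ∑ m, Θ l m * T l (Vv i j c x₁ y₂ l) * T m (Vv i j c x₁ y₂ m))
      - (∑ l, ∑ m, Θ l m * T l (Vv i j c x₂ y₁ l) * T m (Vv i j c x₂ y₁ m))
      + (∑ l, ∑ m, Θ l m * T l (Vv i j c x₂ y₂ l) * T m (Vv i j c x₂ y₂ m))
      = (Θ i j + Θ j i) * ((T i x₁ - T i x₂) * (T j y₁ - T j y₂)) := by
  simp only [← Finset.sum_sub_distrib, ← Finset.sum_add_distrib]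
  have hpt : ∀ l m : Fin d,
      Θ l m * T l (Vv i j c x₁ y₁ l) * T m (Vv i j c x₁ y₁ m)
        - Θ l m * T l (Vv i j c x₁ y₂ l) * T m (Vv i j c x₁ y₂ m)
        - Θ l m * T l (Vv i j c x₂ y₁ l) * T m (Vv i j c x₂ y₁ m)
        + Θ l m * T l (Vv i j c x₂ y₂ l) * T m (Vv i j c x₂ y₂ m)
      = (if i = l then (if j = m then Θ i j * ((T i x₁ - T i x₂) * (T j y₁ - T j y₂)) else 0) else 0)
        + (if j = l then (if i = m then Θ j i * ((T i x₁ - T i x₂) * (T j y₁ - T j y₂)) else 0) else 0) := by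
    intro l m
    by_cases hli : l = i <;> by_cases hlj : l = j <;>
      by_cases hmi : m = i <;> by_cases hmj : m = j <;>
      simp_all [Vv] <;> try ring
    all_goals (try split_ifs) <;> simp_all [eq_comm (a := i)] <;> try ring
  rw [Finset.sum_congr rfl fun l _ => Finset.sum_congr rfl fun m _ => hpt l m]
  simp only [Finset.sum_add_distrib, Finset.sum_ite_eq, Finset.mem_univ, if_true,
    Finset.sum_ite_irrel, Finset.sum_const_zero]
  ring


theorem stmt18 (d q : ℕ) (hd : 3 ≤ d) (Z : ℝ) (hZ : 0 < Z)
    (f : (Fin d → ℝ) → ℝ) (μ : Fin d → Fin q → ℝ) (S : Fin d → ℝ → Fin q → ℝ)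
    (T : Fin d → ℝ → ℝ) (Θ : Matrix (Fin d) (Fin d) ℝ) (hsymm : Θ.IsSymm)
    (hoff : ∀ i j, i ≠ j → Θ i j ≠ 0)
    (hTmeas : ∀ i, Measurable (T i))
    (hTnc : ∀ i, ∃ y₁ > (0:ℝ), ∃ y₂ > (0:ℝ), T i y₁ ≠ T i y₂)
    (hform : ∀ y : Fin d → ℝ, (∀ i, 0 < y i) → (∃ i, 1 < y i) →
      f y = Z⁻¹ * Real.exp (-(∑ i, μ i ⬝ᵥ S i (y i))
        - ∑ i, ∑ j, Θ i j * T i (y i) * T j (y j)))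
    (hhom : ∀ y : Fin d → ℝ, (∀ i, 0 ≤ y i) → (∃ i, 1 < y i) → ∀ t : ℝ, 1 ≤ t →
      f (t • y) = (t ^ (d+1))⁻¹ * f y)
    (hdens : (∫ y in {y : Fin d → ℝ | (∀ i, 0 ≤ y i) ∧ ∃ i, 1 < y i}, f y) = 1) :
    ∀ i, ∃ c : ℝ, ∀ y > (0:ℝ), T i y = c * Real.log y + T i 1 := by
  -- a third index always exists
  have third : ∀ a b : Fin d, ∃ k : Fin d, k ≠ a ∧ k ≠ b := by
    intro a b
    by_contra h
    push_neg at h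
    have hsubset : (Finset.univ : Finset (Fin d)) ⊆ {a, b} := by
      intro k _
      rcases eq_or_ne k a with rfl | hk
      · simp
      · simp [h k hk]
    have hcard := Finset.card_le_card hsubset
    simp only [Finset.card_univ, Fintype.card_fin] at hcard
    have : ({a, b} : Finset (Fin d)).card ≤ 2 := Finset.card_insert_le a {b} |>.trans (by simp)
    omega
  -- key homogeneity identity on the exponent
  have key : ∀ w : Fin d → ℝ, (∀ l, 0 < w l) → (∃ l, 1 < w l) → ∀ t : ℝ, 1 ≤ t →
      ((∑ l, μ l ⬝ᵥ S l (t * w l)) + ∑ l, ∑ m, Θ l m * T l (t * w l) * T m (t * w m))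
        = ((∑ l, μ l ⬝ᵥ S l (w l)) + ∑ l, ∑ m, Θ l m * T l (w l) * T m (w m))
          + ((d : ℝ) + 1) * Real.log t := by
    intro w hw hw1 t ht
    have ht0 : (0:ℝ) < t := by linarith
    have h2 := hform (t • w) (fun l => by
        simpa [smul_eq_mul] using mul_pos ht0 (hw l))
      (by
        obtain ⟨l, hl⟩ := hw1
        exact ⟨l, by simp only [Pi.smul_apply, smul_eq_mul]; nlinarith [hw l]⟩)
    have h3 := hhom w (fun l => (hw l).le) hw1 t ht
    rw [hform w hw hw1, h2] at h3
    simp only [Pi.smul_apply, smul_eq_mul] at h3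
    have hZ' : (Z : ℝ)⁻¹ ≠ 0 := inv_ne_zero hZ.ne'
    have hlog : Real.log (t ^ (d+1)) = ((d:ℝ) + 1) * Real.log t := by
      rw [Real.log_pow]; push_cast; ring
    have hexp : (t ^ (d+1) : ℝ)⁻¹ = Real.exp (-(((d:ℝ) + 1) * Real.log t)) := by
      rw [Real.exp_neg, ← hlog, Real.exp_log (pow_pos ht0 _)]
    set A1 := (∑ l, μ l ⬝ᵥ S l (t * w l)) with hA1
    set B1 := (∑ l, ∑ m, Θ l m * T l (t * w l) * T m (t * w m)) with hB1
    set A0 := (∑ l, μ l ⬝ᵥ S l (w l)) with hA0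
    set B0 := (∑ l, ∑ m, Θ l m * T l (w l) * T m (w m)) with hB0
    have h4 : Real.exp (-A1 - B1)
        = Real.exp (-(((d:ℝ) + 1) * Real.log t) + (-A0 - B0)) := by
      apply mul_left_cancel₀ hZ'
      rw [h3, hexp, Real.exp_add]; ring
    have h5 := Real.exp_eq_exp.mp h4
    linarith
  -- the cross-difference identity
  have star : ∀ a b : Fin d, a ≠ b → ∀ t : ℝ, 1 ≤ t →
      ∀ x₁ x₂ y₁ y₂ : ℝ, 0 < x₁ → 0 < x₂ → 0 < y₁ → 0 < y₂ →
      (T a (t*x₁) - T a (t*x₂)) * (T b (t*y₁) - T b (t*y₂))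
        = (T a x₁ - T a x₂) * (T b y₁ - T b y₂) := by
    intro a b hab t ht x₁ x₂ y₁ y₂ hx₁ hx₂ hy₁ hy₂
    have ht0 : (0:ℝ) < t := by linarith
    obtain ⟨k, hka, hkb⟩ := third a b
    have hVpos : ∀ x y : ℝ, 0 < x → 0 < y → ∀ l, 0 < Vv a b 2 x y l := by
      intro x y hx hy l
      simp only [Vv]
      split_ifs <;> [exact hx; exact hy; norm_num]
    have hV1 : ∀ x y : ℝ, ∃ l, 1 < Vv a b 2 x y l :=
      fun x y => ⟨k, by simp [Vv, hka, hkb]⟩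
    have hpt : ∀ x y : ℝ, ∀ l, t * Vv a b 2 x y l = Vv a b (t*2) (t*x) (t*y) l := by
      intro x y l
      simp only [Vv]
      split_ifs <;> ring
    have K : ∀ x y : ℝ, 0 < x → 0 < y →
        ((∑ l, μ l ⬝ᵥ S l (Vv a b (t*2) (t*x) (t*y) l))
          + ∑ l, ∑ m, Θ l m * T l (Vv a b (t*2) (t*x) (t*y) l)
              * T m (Vv a b (t*2) (t*x) (t*y) m))
          = ((∑ l, μ l ⬝ᵥ S l (Vv a b 2 x y l))
            + ∑ l, ∑ m, Θ l m * T l (Vv a b 2 x y l) * T m (Vv a b 2 x y m))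
            + ((d : ℝ) + 1) * Real.log t := by
      intro x y hx hy
      have := key (Vv a b 2 x y) (hVpos x y hx hy) (hV1 x y) t ht
      simpa only [hpt x y] using this
    have K11 := K x₁ y₁ hx₁ hy₁
    have K12 := K x₁ y₂ hx₁ hy₂
    have K21 := K x₂ y₁ hx₂ hy₁
    have K22 := K x₂ y₂ hx₂ hy₂
    have C1 := aux_ddQ a b hab T Θ (t*2) (t*x₁) (t*x₂) (t*y₁) (t*y₂)
    have C2 := aux_ddQ a b hab T Θ 2 x₁ x₂ y₁ y₂
    have D1 := aux_ddE a b hab (fun l z => μ l ⬝ᵥ S l z) (t*2) (t*x₁) (t*x₂) (t*y₁) (t*y₂)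
    have D2 := aux_ddE a b hab (fun l z => μ l ⬝ᵥ S l z) 2 x₁ x₂ y₁ y₂
    have hΘba : Θ b a = Θ a b := hsymm.apply a b
    have hΘ : Θ a b + Θ b a ≠ 0 := by
      rw [hΘba]; intro h; exact hoff a b hab (by linarith)
    apply mul_left_cancel₀ hΘ
    linarith [K11, K12, K21, K22, C1, C2, D1, D2]
  clear hform hhom hdens f
  -- scaling functions
  have scale : ∀ a : Fin d, ∀ t : ℝ, ∃ ρ : ℝ, 1 ≤ t →
      ∀ x₁ x₂ : ℝ, 0 < x₁ → 0 < x₂ →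
        T a (t*x₁) - T a (t*x₂) = ρ * (T a x₁ - T a x₂) := by
    intro a t
    by_cases ht : 1 ≤ t
    · obtain ⟨b, hba, -⟩ := third a a
      have hab : a ≠ b := Ne.symm hba
      obtain ⟨b₁, hb₁, b₂, hb₂, hB⟩ := hTnc b
      obtain ⟨a₁, ha₁, a₂, ha₂, hA⟩ := hTnc a
      have hBne : T b b₁ - T b b₂ ≠ 0 := sub_ne_zero.mpr hB
      have hAne : T a a₁ - T a a₂ ≠ 0 := sub_ne_zero.mpr hA
      have hBt : T b (t*b₁) - T b (t*b₂) ≠ 0 := by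
        intro h0
        have hst := star a b hab t ht a₁ a₂ b₁ b₂ ha₁ ha₂ hb₁ hb₂
        rw [h0, mul_zero] at hst
        exact mul_ne_zero hAne hBne hst.symm
      refine ⟨(T b b₁ - T b b₂) / (T b (t*b₁) - T b (t*b₂)), fun _ x₁ x₂ hx₁ hx₂ => ?_⟩
      have hst := star a b hab t ht x₁ x₂ b₁ b₂ hx₁ hx₂ hb₁ hb₂
      rw [div_mul_eq_mul_div, eq_div_iff hBt]
      linear_combination hst
    · exact ⟨0, fun h => absurd h ht⟩
  choose ρ hρ using scale
  -- products of scaling factors equal one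
  have prod1 : ∀ a b : Fin d, a ≠ b → ∀ t : ℝ, 1 ≤ t → ρ a t * ρ b t = 1 := by
    intro a b hab t ht
    obtain ⟨a₁, ha₁, a₂, ha₂, hA⟩ := hTnc a
    obtain ⟨b₁, hb₁, b₂, hb₂, hB⟩ := hTnc b
    have hAne : T a a₁ - T a a₂ ≠ 0 := sub_ne_zero.mpr hA
    have hBne : T b b₁ - T b b₂ ≠ 0 := sub_ne_zero.mpr hB
    have h1 := hρ a t ht a₁ a₂ ha₁ ha₂
    have h2 := hρ b t ht b₁ b₂ hb₁ hb₂
    have h3 := star a b hab t ht a₁ a₂ b₁ b₂ ha₁ ha₂ hb₁ hb₂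
    rw [h1, h2] at h3
    have h4 : (ρ a t * ρ b t) * ((T a a₁ - T a a₂) * (T b b₁ - T b b₂))
        = 1 * ((T a a₁ - T a a₂) * (T b b₁ - T b b₂)) := by linear_combination h3
    exact mul_right_cancel₀ (mul_ne_zero hAne hBne) h4
  -- squares are one
  have sq1 : ∀ a : Fin d, ∀ t : ℝ, 1 ≤ t → ρ a t * ρ a t = 1 := by
    intro a t ht
    obtain ⟨b, hba, -⟩ := third a a
    obtain ⟨c, hca, hcb⟩ := third a b
    have p1 := prod1 a b (Ne.symm hba) t ht
    have p2 := prod1 a c (Ne.symm hca) t ht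
    have p3 := prod1 b c (Ne.symm hcb) t ht
    have hρa0 : ρ a t ≠ 0 := by
      intro h; rw [h, zero_mul] at p1; exact zero_ne_one p1
    have hbc : ρ b t = ρ c t := mul_left_cancel₀ hρa0 (p1.trans p2.symm)
    have p3' : ρ b t * ρ b t = 1 := by rw [hbc] at p3 ⊢; exact p3
    linear_combination (ρ a t * ρ b t + 1) * p1 - ρ a t * ρ a t * p3'
  -- square-root trick: ρ is a square, hence nonnegative, hence = 1
  have rho_one : ∀ a : Fin d, ∀ t : ℝ, 1 ≤ t → ρ a t = 1 := by
    intro a t ht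
    set s := Real.sqrt t with hs
    have hs1 : 1 ≤ s := Real.one_le_sqrt.mpr ht
    have hs0 : (0:ℝ) < s := by linarith
    have hss : s * s = t := Real.mul_self_sqrt (by linarith)
    obtain ⟨a₁, ha₁, a₂, ha₂, hA⟩ := hTnc a
    have hAne : T a a₁ - T a a₂ ≠ 0 := sub_ne_zero.mpr hA
    have h1 := hρ a t ht a₁ a₂ ha₁ ha₂
    have h2 := hρ a s hs1 (s*a₁) (s*a₂) (mul_pos hs0 ha₁) (mul_pos hs0 ha₂)
    have h3 := hρ a s hs1 a₁ a₂ ha₁ ha₂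
    rw [← mul_assoc, ← mul_assoc, hss] at h2
    have hsq : ρ a t = ρ a s * ρ a s := by
      apply mul_right_cancel₀ hAne
      linear_combination -h1 + h2 + ρ a s * h3
    rw [hsq]
    exact sq1 a s hs1
  -- conclusion for a fixed index
  intro i
  have hstep : ∀ t : ℝ, 1 ≤ t → ∀ x : ℝ, 0 < x →
      T i (t*x) = T i x + (T i t - T i 1) := by
    intro t ht x hx
    have h := hρ i t ht x 1 hx one_pos
    rw [rho_one i t ht, one_mul, mul_one] at h
    linarith
  set g : ℝ → ℝ := fun u => T i (Real.exp u) - T i 1 with hgdef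
  have hghalf : ∀ a b : ℝ, 0 ≤ a → g (a + b) = g a + g b := by
    intro a b ha
    have h1 : (1:ℝ) ≤ Real.exp a := Real.one_le_exp ha
    have h2 := hstep (Real.exp a) h1 (Real.exp b) (Real.exp_pos b)
    simp only [hgdef]
    rw [Real.exp_add, h2]
    ring
  have hgadd : ∀ a b : ℝ, g (a + b) = g a + g b := by
    intro a b
    rcases le_or_gt 0 a with ha | ha
    · exact hghalf a b ha
    · have h0 : g 0 = 0 := by
        have := hghalf 0 0 le_rfl
        simp only [add_zero] at this
        linarith
      have hneg : g (-a) + g a = 0 := by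
        have := hghalf (-a) a (by linarith)
        rw [neg_add_cancel, h0] at this
        linarith
      have hb : -a + (a + b) = b := by ring
      have := hghalf (-a) (a + b) (by linarith)
      rw [hb] at this
      linarith
  have hgmeas : Measurable g := ((hTmeas i).comp Real.measurable_exp).sub measurable_const
  have hlin := aux_cauchy g hgmeas hgadd
  refine ⟨g 1, fun y hy => ?_⟩
  have hy' := hlin (Real.log y)
  simp only [hgdef] at hy'
  rw [Real.exp_log hy] at hy'
  simp only [hgdef]
  linarith
end
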